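/- arXiv:2306.17774 — 2 statements merged into one kernel-verified Lean document; each statement's English description precedes it below -/
import Mathlib

section
/- On the domain D = {(u,v) ∈ ℝ² : v > 0, −v < u < v}, define t := (v+u)²/4, r := v−u, Ω² := (u+v)², R := (u+v)(v−u)/2, ν := ∂_u R = −u, λ := ∂_v R = v, T_{uu} := 4/(u+v)², T_{vv} := 4/(u+v)², T_{uv} := 2/(u+v)². Then on D the following four identities hold: (1) ∂_u∂_v(R²) = −Ω²/2 + R²·T_{uv}; (2) ∂_u∂_v log Ω² = Ω²/(2R²) + 2νλ/R² − 2·T_{uv}; (3) ∂_u(Ω^{−2}ν) = −(1/2)·R·Ω^{−2}·T_{uu}; (4) ∂_v(Ω^{−2}λ) = −(1/2)·R·Ω^{−2}·T_{vv}. -/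
/-- The FLRW conformal factor `Ω² = (u+v)²` in double null gauge. -/
noncomputable def flrwOmega2 (u v : ℝ) : ℝ := (u + v) ^ 2

/-- The FLRW area radius `R = (u+v)(v−u)/2` in double null gauge. -/
noncomputable def flrwR (u v : ℝ) : ℝ := (u + v) * (v - u) / 2

/-- The FLRW energy–momentum component `T_{uu} = 4/(u+v)²`. -/
noncomputable def flrwTuu (u v : ℝ) : ℝ := 4 / (u + v) ^ 2

/-- The FLRW energy–momentum component `T_{vv} = 4/(u+v)²`. -/
noncomputable def flrwTvv (u v : ℝ) : ℝ := 4 / (u + v) ^ 2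

/-- The FLRW energy–momentum component `T_{uv} = 2/(u+v)²`. -/
noncomputable def flrwTuv (u v : ℝ) : ℝ := 2 / (u + v) ^ 2

/-! `R = (v² − u²)/2`, so `ν = −u` and `λ = v`; moreover `log Ω² = 2 log (u + v)`, and
`Ω⁻²ν`, `Ω⁻²λ` are `∓x/(x + c)²` in the differentiated variable `x`. Once these derivatives
are computed, each equation is a rational identity in `u, v`, valid as long as `u + v ≠ 0`
(and `R ≠ 0` for the equation of `log Ω²`). -/

open Real

lemma flrwR_eq (u v : ℝ) : flrwR u v = (v ^ 2 - u ^ 2) / 2 := by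
  unfold flrwR; ring

lemma hasDerivAt_flrwR_left (u v : ℝ) : HasDerivAt (flrwR · v) (-u) u := by
  have h := ((hasDerivAt_pow 2 u).const_sub (v ^ 2)).div_const 2
  simp only [← flrwR_eq] at h
  exact h.congr_deriv (by norm_num; ring)

lemma hasDerivAt_flrwR_right (u v : ℝ) : HasDerivAt (flrwR u ·) v v := by
  have h := ((hasDerivAt_pow 2 v).sub_const (u ^ 2)).div_const 2
  simp only [← flrwR_eq] at h
  exact h.congr_deriv (by norm_num)

lemma deriv_flrwR_left (v : ℝ) : deriv (flrwR · v) = fun u => -u :=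
  funext fun u => (hasDerivAt_flrwR_left u v).deriv

lemma deriv_flrwR_right (u : ℝ) : deriv (flrwR u ·) = id :=
  funext fun v => (hasDerivAt_flrwR_right u v).deriv

lemma deriv_flrwR_sq_right (u v : ℝ) :
    deriv (fun v' => flrwR u v' ^ 2) v = 2 * flrwR u v * v := by
  rw [((hasDerivAt_flrwR_right u v).fun_pow 2).deriv]
  ring

-- Valid also at `u + v = 0`, through the junk values `log 0 = 0` and `0⁻¹ = 0`.
lemma deriv_log_flrwOmega2_right (u v : ℝ) :
    deriv (fun v' => log (flrwOmega2 u v')) v = 2 / (u + v) := by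
  simp only [flrwOmega2, log_pow]
  rw [deriv_const_mul_field, deriv_comp_const_add, deriv_log]
  push_cast
  ring

lemma hasDerivAt_div_add_sq {c x : ℝ} (h : x + c ≠ 0) :
    HasDerivAt (fun y => y / (y + c) ^ 2) ((c - x) / (x + c) ^ 3) x := by
  have hsq : HasDerivAt (fun y => (y + c) ^ 2) (2 * (x + c)) x := by
    simpa using ((hasDerivAt_id x).add_const c).fun_pow 2
  refine ((hasDerivAt_id' x).fun_div hsq (pow_ne_zero 2 h)).congr_deriv ?_
  field_simp
  ring

lemma flrw_wave_equation_R_sq {u v : ℝ} (hsum : u + v ≠ 0) :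
    deriv (fun u' => deriv (fun v' => (flrwR u' v') ^ 2) v) u
      = -(flrwOmega2 u v) / 2 + (flrwR u v) ^ 2 * flrwTuv u v := by
  simp only [deriv_flrwR_sq_right]
  rw [((hasDerivAt_flrwR_left u v).const_mul 2 |>.mul_const v).deriv]
  unfold flrwOmega2 flrwR flrwTuv
  field_simp
  ring

lemma flrw_wave_equation_log_Omega2 {u v : ℝ} (hsum : u + v ≠ 0) (hdiff : v - u ≠ 0) :
    deriv (fun u' => deriv (fun v' => log (flrwOmega2 u' v')) v) u
      = flrwOmega2 u v / (2 * (flrwR u v) ^ 2)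
        + 2 * (deriv (fun u' => flrwR u' v) u) * (deriv (fun v' => flrwR u v') v)
            / (flrwR u v) ^ 2
        - 2 * flrwTuv u v := by
  simp only [deriv_log_flrwOmega2_right, deriv_flrwR_left, deriv_flrwR_right, id]
  have h := ((hasDerivAt_id u).add_const v).fun_inv hsum |>.const_mul 2
  simp only [id, ← div_eq_mul_inv] at h
  rw [h.deriv, flrwOmega2, flrwR, flrwTuv]
  field_simp
  ring

lemma flrw_raychaudhuri_u {u v : ℝ} (hsum : u + v ≠ 0) :
    deriv (fun u' => (flrwOmega2 u' v)⁻¹ * deriv (fun u'' => flrwR u'' v) u') u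
      = -(1 / 2) * flrwR u v * (flrwOmega2 u v)⁻¹ * flrwTuu u v := by
  have hfun : (fun u' => (flrwOmega2 u' v)⁻¹ * deriv (fun u'' => flrwR u'' v) u')
      = fun u' => -(u' / (u' + v) ^ 2) := by
    rw [deriv_flrwR_left]; funext u'; rw [flrwOmega2]; ring
  rw [hfun, (hasDerivAt_div_add_sq hsum).fun_neg.deriv]
  unfold flrwOmega2 flrwR flrwTuu
  field_simp
  ring

lemma flrw_raychaudhuri_v {u v : ℝ} (hsum : u + v ≠ 0) :
    deriv (fun v' => (flrwOmega2 u v')⁻¹ * deriv (fun v'' => flrwR u v'') v') v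
      = -(1 / 2) * flrwR u v * (flrwOmega2 u v)⁻¹ * flrwTvv u v := by
  have hfun : (fun v' => (flrwOmega2 u v')⁻¹ * deriv (fun v'' => flrwR u v'') v')
      = fun v' => v' / (v' + u) ^ 2 := by
    rw [deriv_flrwR_right]; funext v'; rw [flrwOmega2, add_comm u, id, div_eq_inv_mul]
  rw [hfun, (hasDerivAt_div_add_sq (add_comm u v ▸ hsum)).deriv, add_comm v u]
  unfold flrwOmega2 flrwR flrwTvv
  field_simp
  ring

/-- **The FLRW solution satisfies the spherically symmetric Einstein equations in
double null gauge.**  On `D = {(u,v) : v > 0, −v < u < v}`, with `ν = ∂_u R = −u`,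
`λ = ∂_v R = v`, the identities
(1) `∂_u∂_v(R²) = −Ω²/2 + R²·T_{uv}`;
(2) `∂_u∂_v log Ω² = Ω²/(2R²) + 2νλ/R² − 2T_{uv}`;
(3) `∂_u(Ω^{−2}ν) = −(1/2)RΩ^{−2}T_{uu}`;
(4) `∂_v(Ω^{−2}λ) = −(1/2)RΩ^{−2}T_{vv}` hold. -/
theorem flrw_satisfies_einstein_double_null :
    ∀ u v : ℝ, 0 < v → -v < u → u < v →
      -- ν := ∂_u R = −u and λ := ∂_v R = v
      deriv (fun u' => flrwR u' v) u = -u ∧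
      deriv (fun v' => flrwR u v') v = v ∧
      -- (1)
      deriv (fun u' => deriv (fun v' => (flrwR u' v') ^ 2) v) u
        = -(flrwOmega2 u v) / 2 + (flrwR u v) ^ 2 * flrwTuv u v ∧
      -- (2)
      deriv (fun u' => deriv (fun v' => Real.log (flrwOmega2 u' v')) v) u
        = flrwOmega2 u v / (2 * (flrwR u v) ^ 2)
          + 2 * (deriv (fun u' => flrwR u' v) u) * (deriv (fun v' => flrwR u v') v)
              / (flrwR u v) ^ 2
          - 2 * flrwTuv u v ∧
      -- (3)
      deriv (fun u' => (flrwOmega2 u' v)⁻¹ * deriv (fun u'' => flrwR u'' v) u') u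
        = -(1 / 2) * flrwR u v * (flrwOmega2 u v)⁻¹ * flrwTuu u v ∧
      -- (4)
      deriv (fun v' => (flrwOmega2 u v')⁻¹ * deriv (fun v'' => flrwR u v'') v') v
        = -(1 / 2) * flrwR u v * (flrwOmega2 u v)⁻¹ * flrwTvv u v := by
  intro u v hv hlt hgt
  have hsum : u + v ≠ 0 := (by linarith : 0 < u + v).ne'
  have hdiff : v - u ≠ 0 := (by linarith : 0 < v - u).ne'
  exact ⟨(hasDerivAt_flrwR_left u v).deriv, (hasDerivAt_flrwR_right u v).deriv,
    flrw_wave_equation_R_sq hsum, flrw_wave_equation_log_Omega2 hsum hdiff,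
    flrw_raychaudhuri_u hsum, flrw_raychaudhuri_v hsum⟩
end

section
/- Let c₁, C₁ > 0 and L₀ ≥ 0. There exists K > 0, depending only on c₁, C₁ and L₀, with the following property. Let t ≥ 1, let Ω², R > 0 satisfy R ≥ c₁·t and Ω² ≤ C₁·t, let ε₀ ≥ 0, and let f, f∘ : (0,∞)×[0,∞) → [0,∞) be measurable with |f − f∘| ≤ ε₀ everywhere and f = f∘ outside the set S := {(q,L) : 0 < q ≤ C₁/t, 0 ≤ L ≤ L₀, L² ≤ C₁·Ω²·R²·q²/t}. For h : (0,∞)×[0,∞) → [0,∞) define N_{uu}[h] := (π/2)·R^{−4}·∫₀^∞∫₀^∞ h(q,L)·q·L dL dq, N_{uv}[h] := (π/2)·∫₀^∞∫₀^∞ h(q,L)·L³/(R⁸·q) dL dq, N_{vv}[h] := (π/2)·∫₀^∞∫₀^∞ h(q,L)·L⁵/(R¹²·q³) dL dq. Then, whenever the integrals for f∘ are finite: |N_{uu}[f] − N_{uu}[f∘]| ≤ K·ε₀/t⁶, |N_{uv}[f] − N_{uv}[f∘]| ≤ K·ε₀/t⁸, and |N_{vv}[f] − N_{vv}[f∘]|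 ≤ K·ε₀/t¹⁰. -/
/-!
The differences are integrals of `(f − f∘)·w` over the set `S`, where `|f − f∘| ≤ ε₀` and `S`
lies in the rectangle `(0, C₁/t] × [0, L₀]` of area `C₁L₀/t`. On `S` the constraint
`L² ≤ C₁Ω²R²q²/t` together with `Ω² ≤ C₁t` gives `L ≤ C₁Rq`, which tames the singular weights:
`L³/(R⁸q) ≤ L₀C₁³/(R⁶t)` and `L⁵/(R¹²q³) ≤ L₀C₁⁵/(R⁸t)`. With `R ≥ c₁t` the three bounds
`ε₀C₁²L₀²/(R⁴t²)`, `ε₀C₁⁴L₀²/(R⁶t²)`, `ε₀C₁⁶L₀²/(R⁸t²)` become the rates `t⁻⁶`, `t⁻⁸`, `t⁻¹⁰`.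
-/

open MeasureTheory Set

section ProductIntegral

variable {α β : Type*} [MeasurableSpace α] [MeasurableSpace β] {μ : Measure α} {ν : Measure β}
  [SFinite μ] [SFinite ν]

theorem abs_integral_integral_sub_le_of_le_indicator {F G : α → β → ℝ} {s : Set (α × β)}
    {M : ℝ} (hs : MeasurableSet s) (hμνs : μ.prod ν s ≠ ⊤)
    (hF : AEStronglyMeasurable (fun z : α × β => F z.1 z.2) (μ.prod ν))
    (hG : Integrable (fun z : α × β => G z.1 z.2) (μ.prod ν))
    (hFG : ∀ x y, |F x y - G x y| ≤ s.indicator (fun _ => M) (x, y)) :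
    |∫ x, ∫ y, F x y ∂ν ∂μ - ∫ x, ∫ y, G x y ∂ν ∂μ| ≤ (μ.prod ν).real s * M := by
  have hM : Integrable (s.indicator fun _ => M) (μ.prod ν) :=
    (integrable_indicator_iff hs).2 (integrableOn_const hμνs)
  have hFG' : Integrable (fun z : α × β => F z.1 z.2 - G z.1 z.2) (μ.prod ν) :=
    hM.mono' (hF.sub hG.aestronglyMeasurable) (ae_of_all _ fun z => hFG z.1 z.2)
  have hF' : Integrable (fun z : α × β => F z.1 z.2) (μ.prod ν) :=
    (hFG'.add hG).congr (ae_of_all _ fun z => sub_add_cancel _ _)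
  rw [← integral_prod _ hF', ← integral_prod _ hG, ← integral_sub hF' hG]
  calc _ ≤ ∫ z, |F z.1 z.2 - G z.1 z.2| ∂(μ.prod ν) := abs_integral_le_integral_abs
    _ ≤ ∫ z, s.indicator (fun _ => M) z ∂(μ.prod ν) :=
        integral_mono hFG'.abs hM fun z => hFG z.1 z.2
    _ = (μ.prod ν).real s * M := integral_indicator_const M hs

end ProductIntegral

theorem abs_integral_Ioi_Ici_sub_le_of_le_indicator {F G : ℝ → ℝ → ℝ} {a b M : ℝ}
    (ha : 0 ≤ a) (hb : 0 ≤ b) (hF : Measurable fun z : ℝ × ℝ => F z.1 z.2)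
    (hG : IntegrableOn (fun z : ℝ × ℝ => G z.1 z.2) (Ioi 0 ×ˢ Ici 0))
    (hFG : ∀ q L, |F q L - G q L| ≤ (Ioc 0 a ×ˢ Icc 0 b).indicator (fun _ => M) (q, L)) :
    |(∫ q in Ioi (0 : ℝ), ∫ L in Ici (0 : ℝ), F q L)
      - ∫ q in Ioi (0 : ℝ), ∫ L in Ici (0 : ℝ), G q L| ≤ a * b * M := by
  have hprod : (volume.restrict (Ioi (0 : ℝ))).prod (volume.restrict (Ici (0 : ℝ)))
      = volume.restrict (Ioi 0 ×ˢ Ici 0) := by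
    rw [Measure.prod_restrict, ← Measure.volume_eq_prod]
  have hrect : (volume.restrict (Ioi 0 ×ˢ Ici 0)) (Ioc 0 a ×ˢ Icc (0 : ℝ) b)
      = ENNReal.ofReal a * ENNReal.ofReal b := by
    rw [← hprod, Measure.prod_prod, Measure.restrict_apply measurableSet_Ioc,
      Measure.restrict_apply measurableSet_Icc, inter_eq_left.2 Ioc_subset_Ioi_self,
      inter_eq_left.2 Icc_subset_Ici_self, Real.volume_Ioc, Real.volume_Icc, sub_zero, sub_zero]
  have h := abs_integral_integral_sub_le_of_le_indicator (measurableSet_Ioc.prod measurableSet_Icc)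
    (by rw [hprod, hrect]; finiteness) (by rw [hprod]; exact hF.aestronglyMeasurable)
    (by rwa [hprod]) hFG
  rwa [hprod, measureReal_def, hrect, ENNReal.toReal_mul, ENNReal.toReal_ofReal ha,
    ENNReal.toReal_ofReal hb] at h

def perturbedSupport (C₁ L₀ t Om2 R : ℝ) : Set (ℝ × ℝ) :=
  {z | 0 < z.1 ∧ z.1 ≤ C₁ / t ∧ 0 ≤ z.2 ∧ z.2 ≤ L₀ ∧ z.2 ^ 2 ≤ C₁ * Om2 * R ^ 2 * z.1 ^ 2 / t}

section PerturbedSupport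

variable {C₁ L₀ t Om2 R q L : ℝ}

theorem perturbedSupport_subset_Ioc_prod_Icc :
    perturbedSupport C₁ L₀ t Om2 R ⊆ Ioc 0 (C₁ / t) ×ˢ Icc 0 L₀ :=
  fun _ ⟨hq, hqC, hL, hLL₀, _⟩ => ⟨⟨hq, hqC⟩, hL, hLL₀⟩

theorem sq_le_of_mem_perturbedSupport (hC₁ : 0 ≤ C₁) (ht : 0 < t) (hOm2 : Om2 ≤ C₁ * t)
    (h : (q, L) ∈ perturbedSupport C₁ L₀ t Om2 R) : L ^ 2 ≤ (C₁ * R * q) ^ 2 :=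
  calc L ^ 2 ≤ C₁ * Om2 * R ^ 2 * q ^ 2 / t := h.2.2.2.2
    _ ≤ C₁ * (C₁ * t) * R ^ 2 * q ^ 2 / t := by gcongr
    _ = (C₁ * R * q) ^ 2 := by field_simp

theorem pow_two_mul_add_one_le_of_mem_perturbedSupport (hC₁ : 0 ≤ C₁) (ht : 0 < t)
    (hOm2 : Om2 ≤ C₁ * t) (h : (q, L) ∈ perturbedSupport C₁ L₀ t Om2 R) (k : ℕ) :
    L ^ (2 * k + 1) ≤ L₀ * (C₁ * R * q) ^ (2 * k) := by
  rw [pow_succ', pow_mul, pow_mul]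
  exact mul_le_mul h.2.2.2.1 (pow_le_pow_left₀ (sq_nonneg L)
    (sq_le_of_mem_perturbedSupport hC₁ ht hOm2 h) k) (by positivity) (h.2.2.1.trans h.2.2.2.1)

theorem weight_uv_le_of_mem_perturbedSupport (hC₁ : 0 ≤ C₁) (ht : 0 < t) (hR : 0 < R)
    (hOm2 : Om2 ≤ C₁ * t) (h : (q, L) ∈ perturbedSupport C₁ L₀ t Om2 R) :
    L ^ 3 / (R ^ 8 * q) ≤ L₀ * C₁ ^ 3 / (R ^ 6 * t) := by
  have hq : 0 < q := h.1
  have hL₀ : 0 ≤ L₀ := h.2.2.1.trans h.2.2.2.1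
  calc L ^ 3 / (R ^ 8 * q) ≤ L₀ * (C₁ * R * q) ^ 2 / (R ^ 8 * q) := by
        gcongr; exact pow_two_mul_add_one_le_of_mem_perturbedSupport hC₁ ht hOm2 h 1
    _ = L₀ * C₁ ^ 2 * q / R ^ 6 := by field_simp
    _ ≤ L₀ * C₁ ^ 2 * (C₁ / t) / R ^ 6 := by gcongr; exact h.2.1
    _ = L₀ * C₁ ^ 3 / (R ^ 6 * t) := by field_simp

theorem weight_vv_le_of_mem_perturbedSupport (hC₁ : 0 ≤ C₁) (ht : 0 < t) (hR : 0 < R)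
    (hOm2 : Om2 ≤ C₁ * t) (h : (q, L) ∈ perturbedSupport C₁ L₀ t Om2 R) :
    L ^ 5 / (R ^ 12 * q ^ 3) ≤ L₀ * C₁ ^ 5 / (R ^ 8 * t) := by
  have hq : 0 < q := h.1
  have hL₀ : 0 ≤ L₀ := h.2.2.1.trans h.2.2.2.1
  calc L ^ 5 / (R ^ 12 * q ^ 3) ≤ L₀ * (C₁ * R * q) ^ 4 / (R ^ 12 * q ^ 3) := by
        gcongr; exact pow_two_mul_add_one_le_of_mem_perturbedSupport hC₁ ht hOm2 h 2
    _ = L₀ * C₁ ^ 4 * q / R ^ 8 := by field_simp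
    _ ≤ L₀ * C₁ ^ 4 * (C₁ / t) / R ^ 8 := by gcongr; exact h.2.1
    _ = L₀ * C₁ ^ 5 / (R ^ 8 * t) := by field_simp

end PerturbedSupport

theorem abs_integral_sub_le_of_eq_off_perturbedSupport {F G : ℝ → ℝ → ℝ}
    {C₁ L₀ t Om2 R M : ℝ} (hC₁ : 0 ≤ C₁) (ht : 0 < t) (hL₀ : 0 ≤ L₀) (hM : 0 ≤ M)
    (hF : Measurable fun z : ℝ × ℝ => F z.1 z.2)
    (hG : IntegrableOn (fun z : ℝ × ℝ => G z.1 z.2) (Ioi 0 ×ˢ Ici 0))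
    (hout : ∀ q L, (q, L) ∉ perturbedSupport C₁ L₀ t Om2 R → F q L = G q L)
    (hin : ∀ q L, (q, L) ∈ perturbedSupport C₁ L₀ t Om2 R → |F q L - G q L| ≤ M) :
    |(∫ q in Ioi (0 : ℝ), ∫ L in Ici (0 : ℝ), F q L)
      - ∫ q in Ioi (0 : ℝ), ∫ L in Ici (0 : ℝ), G q L| ≤ C₁ / t * L₀ * M := by
  refine abs_integral_Ioi_Ici_sub_le_of_le_indicator (by positivity) hL₀ hF hG fun q L => ?_
  by_cases h : (q, L) ∈ perturbedSupport C₁ L₀ t Om2 R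
  · rw [indicator_of_mem (perturbedSupport_subset_Ioc_prod_Icc h)]
    exact hin q L h
  · rw [hout q L h, sub_self, abs_zero]
    exact indicator_nonneg (fun _ _ => hM) _

theorem abs_mul_sub_mul_le {a b w ε W : ℝ} (hab : |a - b| ≤ ε) (hw : 0 ≤ w) (hwW : w ≤ W)
    (hε : 0 ≤ ε) : |a * w - b * w| ≤ ε * W := by
  rw [← sub_mul, abs_mul, abs_of_nonneg hw]
  exact mul_le_mul hab hwW hw hε

section Components

variable {C₁ L₀ t Om2 R ε₀ : ℝ} {f f₀ : ℝ → ℝ → ℝ}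

theorem abs_Nuu_sub_le (hC₁ : 0 ≤ C₁) (ht : 0 < t) (hL₀ : 0 ≤ L₀) (hε : 0 ≤ ε₀)
    (hf : Measurable (Function.uncurry f))
    (hI : IntegrableOn (fun z : ℝ × ℝ => f₀ z.1 z.2 * z.1 * z.2) (Ioi 0 ×ˢ Ici 0))
    (hdiff : ∀ q L, |f q L - f₀ q L| ≤ ε₀)
    (hout : ∀ q L, (q, L) ∉ perturbedSupport C₁ L₀ t Om2 R → f q L = f₀ q L) :
    |Real.pi / 2 * (R ^ 4)⁻¹ * (∫ q in Ioi (0 : ℝ), ∫ L in Ici (0 : ℝ), f q L * q * L)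
      - Real.pi / 2 * (R ^ 4)⁻¹ * (∫ q in Ioi (0 : ℝ), ∫ L in Ici (0 : ℝ), f₀ q L * q * L)|
      ≤ Real.pi / 2 * L₀ ^ 2 * C₁ ^ 2 * ε₀ / (R ^ 4 * t ^ 2) := by
  have h := abs_integral_sub_le_of_eq_off_perturbedSupport (F := fun q L => f q L * q * L)
    (G := fun q L => f₀ q L * q * L) hC₁ ht hL₀ (mul_nonneg hε (by positivity : 0 ≤ C₁ / t * L₀))
    ((hf.mul measurable_fst).mul measurable_snd) hI (fun q L hS => by rw [hout q L hS])
    fun q L hS => by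
      simpa only [mul_assoc] using abs_mul_sub_mul_le (hdiff q L) (mul_nonneg hS.1.le hS.2.2.1)
        (mul_le_mul hS.2.1 hS.2.2.2.1 hS.2.2.1 (by positivity)) hε
  rw [← mul_sub, abs_mul, abs_of_nonneg (by positivity)]
  calc _ ≤ Real.pi / 2 * (R ^ 4)⁻¹ * (C₁ / t * L₀ * (ε₀ * (C₁ / t * L₀))) := by gcongr
    _ = _ := by field_simp

theorem abs_Nuv_sub_le (hC₁ : 0 ≤ C₁) (ht : 0 < t) (hL₀ : 0 ≤ L₀) (hR : 0 < R)
    (hOm2 : Om2 ≤ C₁ * t) (hε : 0 ≤ ε₀) (hf : Measurable (Function.uncurry f))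
    (hI : IntegrableOn (fun z : ℝ × ℝ => f₀ z.1 z.2 * z.2 ^ 3 / (R ^ 8 * z.1)) (Ioi 0 ×ˢ Ici 0))
    (hdiff : ∀ q L, |f q L - f₀ q L| ≤ ε₀)
    (hout : ∀ q L, (q, L) ∉ perturbedSupport C₁ L₀ t Om2 R → f q L = f₀ q L) :
    |Real.pi / 2 * (∫ q in Ioi (0 : ℝ), ∫ L in Ici (0 : ℝ), f q L * L ^ 3 / (R ^ 8 * q))
      - Real.pi / 2 * (∫ q in Ioi (0 : ℝ), ∫ L in Ici (0 : ℝ), f₀ q L * L ^ 3 / (R ^ 8 * q))|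
      ≤ Real.pi / 2 * L₀ ^ 2 * C₁ ^ 4 * ε₀ / (R ^ 6 * t ^ 2) := by
  have h := abs_integral_sub_le_of_eq_off_perturbedSupport
    (F := fun q L => f q L * L ^ 3 / (R ^ 8 * q)) (G := fun q L => f₀ q L * L ^ 3 / (R ^ 8 * q))
    hC₁ ht hL₀ (mul_nonneg hε (by positivity : 0 ≤ L₀ * C₁ ^ 3 / (R ^ 6 * t)))
    ((hf.mul (measurable_snd.pow_const 3)).div (measurable_fst.const_mul (R ^ 8))) hI
    (fun q L hS => by rw [hout q L hS])
    fun q L hS => by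
      simpa only [mul_div_assoc] using abs_mul_sub_mul_le (hdiff q L)
        (by have := hS.1; have := hS.2.2.1; positivity)
        (weight_uv_le_of_mem_perturbedSupport hC₁ ht hR hOm2 hS) hε
  rw [← mul_sub, abs_mul, abs_of_nonneg (by positivity)]
  calc _ ≤ Real.pi / 2 * (C₁ / t * L₀ * (ε₀ * (L₀ * C₁ ^ 3 / (R ^ 6 * t)))) := by gcongr
    _ = _ := by field_simp

theorem abs_Nvv_sub_le (hC₁ : 0 ≤ C₁) (ht : 0 < t) (hL₀ : 0 ≤ L₀) (hR : 0 < R)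
    (hOm2 : Om2 ≤ C₁ * t) (hε : 0 ≤ ε₀) (hf : Measurable (Function.uncurry f))
    (hI : IntegrableOn (fun z : ℝ × ℝ => f₀ z.1 z.2 * z.2 ^ 5 / (R ^ 12 * z.1 ^ 3))
      (Ioi 0 ×ˢ Ici 0))
    (hdiff : ∀ q L, |f q L - f₀ q L| ≤ ε₀)
    (hout : ∀ q L, (q, L) ∉ perturbedSupport C₁ L₀ t Om2 R → f q L = f₀ q L) :
    |Real.pi / 2 * (∫ q in Ioi (0 : ℝ), ∫ L in Ici (0 : ℝ), f q L * L ^ 5 / (R ^ 12 * q ^ 3))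
      - Real.pi / 2 * (∫ q in Ioi (0 : ℝ), ∫ L in Ici (0 : ℝ), f₀ q L * L ^ 5 / (R ^ 12 * q ^ 3))|
      ≤ Real.pi / 2 * L₀ ^ 2 * C₁ ^ 6 * ε₀ / (R ^ 8 * t ^ 2) := by
  have h := abs_integral_sub_le_of_eq_off_perturbedSupport
    (F := fun q L => f q L * L ^ 5 / (R ^ 12 * q ^ 3))
    (G := fun q L => f₀ q L * L ^ 5 / (R ^ 12 * q ^ 3))
    hC₁ ht hL₀ (mul_nonneg hε (by positivity : 0 ≤ L₀ * C₁ ^ 5 / (R ^ 8 * t)))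
    ((hf.mul (measurable_snd.pow_const 5)).div
      ((measurable_fst.pow_const 3).const_mul (R ^ 12))) hI
    (fun q L hS => by rw [hout q L hS])
    fun q L hS => by
      simpa only [mul_div_assoc] using abs_mul_sub_mul_le (hdiff q L)
        (by have := hS.1; have := hS.2.2.1; positivity)
        (weight_vv_le_of_mem_perturbedSupport hC₁ ht hR hOm2 hS) hε
  rw [← mul_sub, abs_mul, abs_of_nonneg (by positivity)]
  calc _ ≤ Real.pi / 2 * (C₁ / t * L₀ * (ε₀ * (L₀ * C₁ ^ 5 / (R ^ 8 * t)))) := by gcongr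
    _ = _ := by field_simp

end Components

theorem mul_div_pow_mul_sq_le {c₁ t R B K ε₀ : ℝ} (hc₁ : 0 < c₁) (ht : 0 < t) (hR : c₁ * t ≤ R)
    (hB : 0 ≤ B) (hε : 0 ≤ ε₀) {m : ℕ} (hBK : B / c₁ ^ m ≤ K) :
    B * ε₀ / (R ^ m * t ^ 2) ≤ K * ε₀ / t ^ (m + 2) :=
  calc B * ε₀ / (R ^ m * t ^ 2) ≤ B * ε₀ / ((c₁ * t) ^ m * t ^ 2) := by gcongr
    _ = B / c₁ ^ m * ε₀ / t ^ (m + 2) := by rw [mul_pow, pow_add]; field_simp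
    _ ≤ K * ε₀ / t ^ (m + 2) := by gcongr

/-- **Decay of the gauge-normalised energy–momentum differences.**
Let `c₁, C₁ > 0` and `L₀ ≥ 0`.  There exists `K > 0`, depending only on `c₁, C₁, L₀`,
such that for all `t ≥ 1`, `Ω², R > 0` with `R ≥ c₁t`, `Ω² ≤ C₁t`, `ε₀ ≥ 0`, and
measurable `f, f∘ ≥ 0` on `(0,∞)×[0,∞)` with `|f − f∘| ≤ ε₀` and `f = f∘` outside
`S = {(q,L) : 0 < q ≤ C₁/t, 0 ≤ L ≤ L₀, L² ≤ C₁Ω²R²q²/t}`, whenever the integrals for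
`f∘` are finite one has, with `N_{uu}[h] = (π/2)R^{−4}∫∫ h q L dL dq`,
`N_{uv}[h] = (π/2)∫∫ h L³/(R⁸q) dL dq` and `N_{vv}[h] = (π/2)∫∫ h L⁵/(R¹²q³) dL dq`:
`|N_{uu}[f] − N_{uu}[f∘]| ≤ Kε₀/t⁶`, `|N_{uv}[f] − N_{uv}[f∘]| ≤ Kε₀/t⁸` and
`|N_{vv}[f] − N_{vv}[f∘]| ≤ Kε₀/t¹⁰`. -/
theorem energy_momentum_difference_decay (c₁ C₁ L₀ : ℝ)
    (hc₁ : 0 < c₁) (hC₁ : 0 < C₁) (hL₀ : 0 ≤ L₀) :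
    ∃ K : ℝ, 0 < K ∧
      ∀ (t Om2 R ε₀ : ℝ) (f f₀ : ℝ → ℝ → ℝ),
        1 ≤ t → 0 < Om2 → 0 < R → c₁ * t ≤ R → Om2 ≤ C₁ * t → 0 ≤ ε₀ →
        Measurable (Function.uncurry f) → Measurable (Function.uncurry f₀) →
        (∀ q L, 0 ≤ f q L) → (∀ q L, 0 ≤ f₀ q L) →
        (∀ q L, |f q L - f₀ q L| ≤ ε₀) →
        (∀ q L, ¬(0 < q ∧ q ≤ C₁ / t ∧ 0 ≤ L ∧ L ≤ L₀ ∧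
            L ^ 2 ≤ C₁ * Om2 * R ^ 2 * q ^ 2 / t) → f q L = f₀ q L) →
        IntegrableOn (fun z : ℝ × ℝ => f₀ z.1 z.2 * z.1 * z.2) (Ioi 0 ×ˢ Ici 0) →
        IntegrableOn (fun z : ℝ × ℝ => f₀ z.1 z.2 * z.2 ^ 3 / (R ^ 8 * z.1))
          (Ioi 0 ×ˢ Ici 0) →
        IntegrableOn (fun z : ℝ × ℝ => f₀ z.1 z.2 * z.2 ^ 5 / (R ^ 12 * z.1 ^ 3))
          (Ioi 0 ×ˢ Ici 0) →
        |Real.pi / 2 * (R ^ 4)⁻¹ *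
              (∫ q in Ioi (0 : ℝ), ∫ L in Ici (0 : ℝ), f q L * q * L)
            - Real.pi / 2 * (R ^ 4)⁻¹ *
              (∫ q in Ioi (0 : ℝ), ∫ L in Ici (0 : ℝ), f₀ q L * q * L)|
          ≤ K * ε₀ / t ^ 6 ∧
        |Real.pi / 2 *
              (∫ q in Ioi (0 : ℝ), ∫ L in Ici (0 : ℝ), f q L * L ^ 3 / (R ^ 8 * q))
            - Real.pi / 2 *
              (∫ q in Ioi (0 : ℝ), ∫ L in Ici (0 : ℝ), f₀ q L * L ^ 3 / (R ^ 8 * q))|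
          ≤ K * ε₀ / t ^ 8 ∧
        |Real.pi / 2 *
              (∫ q in Ioi (0 : ℝ), ∫ L in Ici (0 : ℝ), f q L * L ^ 5 / (R ^ 12 * q ^ 3))
            - Real.pi / 2 *
              (∫ q in Ioi (0 : ℝ), ∫ L in Ici (0 : ℝ), f₀ q L * L ^ 5 / (R ^ 12 * q ^ 3))|
          ≤ K * ε₀ / t ^ 10 := by
  set K₄ := Real.pi / 2 * L₀ ^ 2 * C₁ ^ 2 / c₁ ^ 4
  set K₆ := Real.pi / 2 * L₀ ^ 2 * C₁ ^ 4 / c₁ ^ 6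
  set K₈ := Real.pi / 2 * L₀ ^ 2 * C₁ ^ 6 / c₁ ^ 8
  have hK₄ : 0 ≤ K₄ := by positivity
  have hK₆ : 0 ≤ K₆ := by positivity
  have hK₈ : 0 ≤ K₈ := by positivity
  refine ⟨K₄ + K₆ + K₈ + 1, by positivity, ?_⟩
  intro t Om2 R ε₀ f f₀ ht _ hR hRt hOm2 hε hf _ _ _ hdiff hout hI₄ hI₆ hI₈
  have ht₀ : 0 < t := one_pos.trans_le ht
  refine ⟨?_, ?_, ?_⟩
  · exact (abs_Nuu_sub_le hC₁.le ht₀ hL₀ hε hf hI₄ hdiff hout).trans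
      (mul_div_pow_mul_sq_le hc₁ ht₀ hRt (by positivity) hε (by linarith))
  · exact (abs_Nuv_sub_le hC₁.le ht₀ hL₀ hR hOm2 hε hf hI₆ hdiff hout).trans
      (mul_div_pow_mul_sq_le hc₁ ht₀ hRt (by positivity) hε (by linarith))
  · exact (abs_Nvv_sub_le hC₁.le ht₀ hL₀ hR hOm2 hε hf hI₈ hdiff hout).trans
      (mul_div_pow_mul_sq_le hc₁ ht₀ hRt (by positivity) hε (by linarith))
end
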